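/- arXiv:2306.14585 — 3 statements merged into one kernel-verified Lean document; each statement's English description precedes it below -/
import Mathlib

section
/- Let f : ℝ⁴ → ℝ be smooth, with variables written f = f(a,b,c,d). Then f satisfies the three equations ∂²f/∂a² = 0, (∂/∂b + ∂/∂c)²f = 0 and ∂²f/∂d² = 0 identically on ℝ⁴ if and only if there exist smooth functions A₀, A₁, A₂, A₃, A₄, A₅, A₆, A₇ : ℝ → ℝ such that for all (a,b,c,d) ∈ ℝ⁴: f(a,b,c,d) = A₀(b−c)·a·b·d + A₁(b−c)·b·d + A₂(b−c)·a·b + A₃(b−c)·a·d + A₄(b−c)·a + A₅(b−c)·b + A₆(b−c)·d + A₇(b−c). -/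
/-- Directional derivative of `f` along the constant direction `v`. -/
noncomputable def dirDeriv (v : ℝ × ℝ × ℝ × ℝ) (f : ℝ × ℝ × ℝ × ℝ → ℝ) :
    ℝ × ℝ × ℝ × ℝ → ℝ :=
  fun x => fderiv ℝ f x v

lemma line_hasDerivAt {g : ℝ × ℝ × ℝ × ℝ → ℝ} {v x : ℝ × ℝ × ℝ × ℝ} {t₀ : ℝ}
    (hg : DifferentiableAt ℝ g (x + t₀ • v)) :
    HasDerivAt (fun t : ℝ => g (x + t • v)) (dirDeriv v g (x + t₀ • v)) t₀ := by
  have hL : HasDerivAt (fun t : ℝ => x + t • v) v t₀ := by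
    simpa using ((hasDerivAt_id t₀).smul_const v).const_add x
  exact hg.hasFDerivAt.comp_hasDerivAt t₀ hL

lemma dirDeriv_contDiff {g : ℝ × ℝ × ℝ × ℝ → ℝ} (hg : ContDiff ℝ (⊤ : ℕ∞) g)
    (v : ℝ × ℝ × ℝ × ℝ) : ContDiff ℝ (⊤ : ℕ∞) (dirDeriv v g) :=
  (hg.fderiv_right (by simp)).clm_apply contDiff_const

lemma dirDeriv_eq_of_line {g : ℝ × ℝ × ℝ × ℝ → ℝ} {x v : ℝ × ℝ × ℝ × ℝ} {m : ℝ}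
    (hg : DifferentiableAt ℝ g x) (h : ∀ t : ℝ, g (x + t • v) = g x + t * m) :
    dirDeriv v g x = m := by
  have H1 : HasDerivAt (fun t : ℝ => g (x + t • v)) (dirDeriv v g x) 0 := by
    have := line_hasDerivAt (g := g) (v := v) (x := x) (t₀ := 0) (by simpa using hg)
    simpa using this
  have H2 : HasDerivAt (fun t : ℝ => g x + t * m) m 0 := by
    simpa using ((hasDerivAt_id (0:ℝ)).mul_const m).const_add (g x)
  rw [funext h] at H1
  exact H1.unique H2

lemma affine_line {g : ℝ × ℝ × ℝ × ℝ → ℝ} (hg : ContDiff ℝ (⊤ : ℕ∞) g) {v : ℝ × ℝ × ℝ × ℝ}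
    (h : ∀ y, dirDeriv v (dirDeriv v g) y = 0) (x : ℝ × ℝ × ℝ × ℝ) (t : ℝ) :
    g (x + t • v) = g x + t * (g (x + v) - g x) := by
  have hg1 : ContDiff ℝ (⊤ : ℕ∞) (dirDeriv v g) := dirDeriv_contDiff hg v
  have hψ : ∀ t : ℝ, dirDeriv v g (x + t • v) = dirDeriv v g x := by
    have hd : ∀ s : ℝ, HasDerivAt (fun t : ℝ => dirDeriv v g (x + t • v))
        (dirDeriv v (dirDeriv v g) (x + s • v)) s := fun s =>
      line_hasDerivAt (hg1.differentiable (by simp) _)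
    intro t
    have := is_const_of_deriv_eq_zero (f := fun t : ℝ => dirDeriv v g (x + t • v))
      (fun s => (hd s).differentiableAt)
      (fun s => by rw [(hd s).deriv]; exact h _) t 0
    simpa using this
  have hφ : ∀ s : ℝ, HasDerivAt (fun t : ℝ => g (x + t • v)) (dirDeriv v g x) s := by
    intro s
    have := line_hasDerivAt (g := g) (v := v) (x := x) (t₀ := s)
      (hg.differentiable (by simp) _)
    rwa [hψ s] at this
  have main : ∀ t : ℝ, g (x + t • v) = g x + t * dirDeriv v g x := by
    intro t
    have H : ∀ s : ℝ, HasDerivAt (fun t : ℝ => g (x + t • v) - t * dirDeriv v g x) 0 s :=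
      fun s => by
        have h2 := (hφ s).sub ((hasDerivAt_id' s).mul_const (dirDeriv v g x))
        simp only [one_mul, sub_self] at h2
        exact h2
    have := is_const_of_deriv_eq_zero
      (f := fun t : ℝ => g (x + t • v) - t * dirDeriv v g x)
      (fun s => (H s).differentiableAt) (fun s => (H s).deriv) t 0
    simp only [zero_smul, add_zero, zero_mul, sub_zero] at this
    linarith [this]
  have h1 := main 1
  rw [one_smul] at h1
  rw [main t]
  have : dirDeriv v g x = g (x + v) - g x := by linarith
  rw [this]

lemma dirDeriv_zero_of_const {g : ℝ × ℝ × ℝ × ℝ → ℝ} {x v : ℝ × ℝ × ℝ × ℝ}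
    (hg : DifferentiableAt ℝ g x) (h : ∀ t : ℝ, g (x + t • v) = g x) :
    dirDeriv v g x = 0 :=
  dirDeriv_eq_of_line hg (fun t => by rw [h t]; ring)

/-- A smooth `f(a,b,c,d)` satisfies `∂²f/∂a² = 0`, `(∂/∂b + ∂/∂c)² f = 0`,
`∂²f/∂d² = 0` identically iff it has the representation
`f = A₀(b−c)·a·b·d + A₁(b−c)·b·d + A₂(b−c)·a·b + A₃(b−c)·a·d + A₄(b−c)·a
  + A₅(b−c)·b + A₆(b−c)·d + A₇(b−c)` with smooth coefficients `Aᵢ`. -/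
theorem stmt0 (f : ℝ × ℝ × ℝ × ℝ → ℝ) (hf : ContDiff ℝ (⊤ : ℕ∞) f) :
    ((∀ x, dirDeriv (1, 0, 0, 0) (dirDeriv (1, 0, 0, 0) f) x = 0) ∧
     (∀ x, dirDeriv (0, 1, 1, 0) (dirDeriv (0, 1, 1, 0) f) x = 0) ∧
     (∀ x, dirDeriv (0, 0, 0, 1) (dirDeriv (0, 0, 0, 1) f) x = 0)) ↔
    ∃ A : Fin 8 → ℝ → ℝ, (∀ i, ContDiff ℝ (⊤ : ℕ∞) (A i)) ∧
      ∀ a b c d : ℝ,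
        f (a, b, c, d) =
          A 0 (b - c) * a * b * d + A 1 (b - c) * b * d + A 2 (b - c) * a * b +
          A 3 (b - c) * a * d + A 4 (b - c) * a + A 5 (b - c) * b +
          A 6 (b - c) * d + A 7 (b - c) := by
  constructor
  · rintro ⟨h1, h2, h3⟩
    have E1 : ∀ a b c d : ℝ,
        f (a, b, c, d) = f (0, b, c, d) + a * (f (1, b, c, d) - f (0, b, c, d)) := by
      intro a b c d
      have := affine_line hf h1 (0, b, c, d) a
      norm_num [Prod.ext_iff] at this
      convert this using 3
    have E2 : ∀ a b c d : ℝ,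
        f (a, b, c, d) = f (a, b - c, 0, d)
          + c * (f (a, b - c + 1, 1, d) - f (a, b - c, 0, d)) := by
      intro a b c d
      have := affine_line hf h2 (a, b - c, 0, d) c
      have e1 : (a, b - c, (0:ℝ), d) + c • ((0:ℝ), (1:ℝ), (1:ℝ), (0:ℝ)) = (a, b, c, d) := by
        simp [Prod.ext_iff]
      have e2 : (a, b - c, (0:ℝ), d) + ((0:ℝ), (1:ℝ), (1:ℝ), (0:ℝ)) = (a, b - c + 1, 1, d) := by
        simp [Prod.ext_iff]
      rw [e1, e2] at this
      exact this
    have E3 : ∀ a b c d : ℝ,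
        f (a, b, c, d) = f (a, b, c, 0) + d * (f (a, b, c, 1) - f (a, b, c, 0)) := by
      intro a b c d
      have := affine_line hf h3 (a, b, c, 0) d
      have e1 : (a, b, c, (0:ℝ)) + d • ((0:ℝ), (0:ℝ), (0:ℝ), (1:ℝ)) = (a, b, c, d) := by
        simp [Prod.ext_iff]
      have e2 : (a, b, c, (0:ℝ)) + ((0:ℝ), (0:ℝ), (0:ℝ), (1:ℝ)) = (a, b, c, 1) := by
        simp [Prod.ext_iff]
      rw [e1, e2] at this
      exact this
    have hw : ∀ p q r : ℝ, ContDiff ℝ (⊤ : ℕ∞) (fun τ : ℝ => f (p, τ + q, q, r)) := by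
      intro p q r
      exact hf.comp (by fun_prop)
    have hw0 : ∀ p r : ℝ, ContDiff ℝ (⊤ : ℕ∞) (fun τ : ℝ => f (p, τ, 0, r)) := by
      intro p r
      have := hw p 0 r
      simpa using this
    set g0 : ℝ → ℝ := fun τ : ℝ => - f (0, τ, 0, 0) + f (0, τ, 0, 1) + f (0, τ + 1, 1, 0) - f (0, τ + 1, 1, 1) + f (1, τ, 0, 0) - f (1, τ, 0, 1) - f (1, τ + 1, 1, 0) + f (1, τ + 1, 1, 1) with hg0
    set g1 : ℝ → ℝ := fun τ : ℝ => f (0, τ, 0, 0) - f (0, τ, 0, 1) - f (0, τ + 1, 1, 0) + f (0, τ + 1, 1, 1) with hg1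
    set g2 : ℝ → ℝ := fun τ : ℝ => f (0, τ, 0, 0) - f (0, τ + 1, 1, 0) - f (1, τ, 0, 0) + f (1, τ + 1, 1, 0) with hg2
    set g3 : ℝ → ℝ := fun τ : ℝ => f (0, τ, 0, 0) - f (0, τ, 0, 1) - f (1, τ, 0, 0) + f (1, τ, 0, 1) + τ * f (0, τ, 0, 0) - τ * f (0, τ, 0, 1) - τ * f (0, τ + 1, 1, 0) + τ * f (0, τ + 1, 1, 1) - τ * f (1, τ, 0, 0) + τ * f (1, τ, 0, 1) + τ * f (1, τ + 1, 1, 0) - τ * f (1, τ + 1, 1, 1) with hg3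
    set g4 : ℝ → ℝ := fun τ : ℝ => - f (0, τ, 0, 0) + f (1, τ, 0, 0) - τ * f (0, τ, 0, 0) + τ * f (0, τ + 1, 1, 0) + τ * f (1, τ, 0, 0) - τ * f (1, τ + 1, 1, 0) with hg4
    set g5 : ℝ → ℝ := fun τ : ℝ => - f (0, τ, 0, 0) + f (0, τ + 1, 1, 0) with hg5
    set g6 : ℝ → ℝ := fun τ : ℝ => - f (0, τ, 0, 0) + f (0, τ, 0, 1) - τ * f (0, τ, 0, 0) + τ * f (0, τ, 0, 1) + τ * f (0, τ + 1, 1, 0) - τ * f (0, τ + 1, 1, 1) with hg6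
    set g7 : ℝ → ℝ := fun τ : ℝ => f (0, τ, 0, 0) + τ * f (0, τ, 0, 0) - τ * f (0, τ + 1, 1, 0) with hg7
    refine ⟨![g0, g1, g2, g3, g4, g5, g6, g7], ?_, ?_⟩
    · intro i
      fin_cases i
      · show ContDiff ℝ (⊤ : ℕ∞) g0
        rw [hg0]; fun_prop
      · show ContDiff ℝ (⊤ : ℕ∞) g1
        rw [hg1]; fun_prop
      · show ContDiff ℝ (⊤ : ℕ∞) g2
        rw [hg2]; fun_prop
      · show ContDiff ℝ (⊤ : ℕ∞) g3
        rw [hg3]; fun_prop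
      · show ContDiff ℝ (⊤ : ℕ∞) g4
        rw [hg4]; fun_prop
      · show ContDiff ℝ (⊤ : ℕ∞) g5
        rw [hg5]; fun_prop
      · show ContDiff ℝ (⊤ : ℕ∞) g6
        rw [hg6]; fun_prop
      · show ContDiff ℝ (⊤ : ℕ∞) g7
        rw [hg7]; fun_prop
    · intro a b c d
      show f (a, b, c, d) =
        g0 (b - c) * a * b * d + g1 (b - c) * b * d + g2 (b - c) * a * b +
        g3 (b - c) * a * d + g4 (b - c) * a + g5 (b - c) * b +
        g6 (b - c) * d + g7 (b - c)
      rw [hg0, hg1, hg2, hg3, hg4, hg5, hg6, hg7]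
      rw [E1 a b c d, E2 0 b c d, E2 1 b c d,
        E3 0 (b - c) 0 d, E3 0 (b - c + 1) 1 d, E3 1 (b - c) 0 d, E3 1 (b - c + 1) 1 d]
      ring
  · rintro ⟨A, hA, hrep⟩
    have hAd : ∀ i, Differentiable ℝ (A i) := fun i => (hA i).differentiable (by simp)
    have hfd : Differentiable ℝ f := hf.differentiable (by simp)
    refine ⟨?_, ?_, ?_⟩
    · -- direction (1,0,0,0)
      set β : ℝ × ℝ × ℝ × ℝ → ℝ := fun x =>
        A 0 (x.2.1 - x.2.2.1) * x.2.1 * x.2.2.2 + A 2 (x.2.1 - x.2.2.1) * x.2.1 +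
        A 3 (x.2.1 - x.2.2.1) * x.2.2.2 + A 4 (x.2.1 - x.2.2.1) with hβ
      have hβc : ContDiff ℝ (⊤ : ℕ∞) β := by
        rw [hβ]; fun_prop
      have step1 : dirDeriv (1, 0, 0, 0) f = β := by
        funext x
        obtain ⟨a, b, c, d⟩ := x
        refine dirDeriv_eq_of_line (hfd _) (fun t => ?_)
        have e : ((a, b, c, d) : ℝ × ℝ × ℝ × ℝ) + t • ((1:ℝ), (0:ℝ), (0:ℝ), (0:ℝ))
            = (a + t, b, c, d) := by simp [Prod.ext_iff]
        rw [e, hrep (a + t) b c d, hrep a b c d, hβ]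
        ring
      rw [step1]
      intro x
      obtain ⟨a, b, c, d⟩ := x
      refine dirDeriv_zero_of_const (hβc.differentiable (by simp) _) (fun t => ?_)
      have e : ((a, b, c, d) : ℝ × ℝ × ℝ × ℝ) + t • ((1:ℝ), (0:ℝ), (0:ℝ), (0:ℝ))
          = (a + t, b, c, d) := by simp [Prod.ext_iff]
      rw [e, hβ]
    · -- direction (0,1,1,0)
      set β : ℝ × ℝ × ℝ × ℝ → ℝ := fun x =>
        A 0 (x.2.1 - x.2.2.1) * x.1 * x.2.2.2 + A 1 (x.2.1 - x.2.2.1) * x.2.2.2 +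
        A 2 (x.2.1 - x.2.2.1) * x.1 + A 5 (x.2.1 - x.2.2.1) with hβ
      have hβc : ContDiff ℝ (⊤ : ℕ∞) β := by
        rw [hβ]; fun_prop
      have step1 : dirDeriv (0, 1, 1, 0) f = β := by
        funext x
        obtain ⟨a, b, c, d⟩ := x
        refine dirDeriv_eq_of_line (hfd _) (fun t => ?_)
        have e : ((a, b, c, d) : ℝ × ℝ × ℝ × ℝ) + t • ((0:ℝ), (1:ℝ), (1:ℝ), (0:ℝ))
            = (a, b + t, c + t, d) := by simp [Prod.ext_iff]
        rw [e, hrep a (b + t) (c + t) d, hrep a b c d, hβ]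
        simp only [show b + t - (c + t) = b - c by ring]
        ring
      rw [step1]
      intro x
      obtain ⟨a, b, c, d⟩ := x
      refine dirDeriv_zero_of_const (hβc.differentiable (by simp) _) (fun t => ?_)
      have e : ((a, b, c, d) : ℝ × ℝ × ℝ × ℝ) + t • ((0:ℝ), (1:ℝ), (1:ℝ), (0:ℝ))
          = (a, b + t, c + t, d) := by simp [Prod.ext_iff]
      rw [e, hβ]
      simp only [show b + t - (c + t) = b - c by ring]
    · -- direction (0,0,0,1)
      set β : ℝ × ℝ × ℝ × ℝ → ℝ := fun x =>
        A 0 (x.2.1 - x.2.2.1) * x.1 * x.2.1 + A 1 (x.2.1 - x.2.2.1) * x.2.1 +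
        A 3 (x.2.1 - x.2.2.1) * x.1 + A 6 (x.2.1 - x.2.2.1) with hβ
      have hβc : ContDiff ℝ (⊤ : ℕ∞) β := by
        rw [hβ]; fun_prop
      have step1 : dirDeriv (0, 0, 0, 1) f = β := by
        funext x
        obtain ⟨a, b, c, d⟩ := x
        refine dirDeriv_eq_of_line (hfd _) (fun t => ?_)
        have e : ((a, b, c, d) : ℝ × ℝ × ℝ × ℝ) + t • ((0:ℝ), (0:ℝ), (0:ℝ), (1:ℝ))
            = (a, b, c, d + t) := by simp [Prod.ext_iff]
        rw [e, hrep a b c (d + t), hrep a b c d, hβ]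
        ring
      rw [step1]
      intro x
      obtain ⟨a, b, c, d⟩ := x
      refine dirDeriv_zero_of_const (hβc.differentiable (by simp) _) (fun t => ?_)
      have e : ((a, b, c, d) : ℝ × ℝ × ℝ × ℝ) + t • ((0:ℝ), (0:ℝ), (0:ℝ), (1:ℝ))
          = (a, b, c, d + t) := by simp [Prod.ext_iff]
      rw [e, hβ]
end

section
/- Let c ∈ ℝ, let A₀, A₃ : ℝ → ℝ be twice continuously differentiable, and let μ : ℝ → ℝ satisfy, for all u, v ∈ ℝ, the functional equation μ(v) − μ(u) = A₀(u−v) − c·(A₀(u−v)·u + A₃(u−v)). Then there exists a constant c₀ such that A₀(τ) = c₀·τ for all τ ∈ ℝ. Moreover, if c ≠ 0, there exist constants c₃₁ and k such that A₃(τ) = −(c₀/2)·τ² + c₃₁·τ for all τ, and μ(w) = (c·c₀/2)·w² + (c·c₃₁ − c₀)·w + k for all w. -/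
/-!
Substituting `v = u - τ` shows that `F u τ := A₀ τ - c (A₀ τ u + A₃ τ) = μ (u - τ) - μ u` is a
cocycle: `F u (τ + σ) = F (u - τ) σ + F u τ`. Comparing the parts of this identity that are
affine in `u` makes `A₀` additive, hence linear by continuity, and (when `c ≠ 0`) makes
`A₃ + (c₀/2) τ²` additive, hence linear as well; `μ` is then read off from the equation at `u = 0`.
-/

theorem Continuous.eq_map_one_mul_of_map_add {f : ℝ → ℝ} (hf : Continuous f)
    (hadd : ∀ x y, f (x + y) = f x + f y) (x : ℝ) : f x = f 1 * x := by
  simpa [mul_comm] using map_real_smul (AddMonoidHom.mk' f hadd) hf x 1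

theorem Continuous.eq_quadratic_of_map_add_sub_mul {f : ℝ → ℝ} (hf : Continuous f) (a : ℝ)
    (hadd : ∀ x y, f (x + y) = f x + f y - a * x * y) (x : ℝ) :
    f x = -(a / 2) * x ^ 2 + (f 1 + a / 2) * x := by
  have hlin := (hf.add (continuous_const.mul (continuous_pow 2))).eq_map_one_mul_of_map_add
    (f := fun x => f x + a / 2 * x ^ 2) (fun x y => by simp only [hadd]; ring) x
  linear_combination hlin

theorem map_add_eq_of_sub_eq {μ : ℝ → ℝ} {F : ℝ → ℝ → ℝ} (h : ∀ u v, μ v - μ u = F u (u - v))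
    (u τ σ : ℝ) : F u (τ + σ) = F (u - τ) σ + F u τ := by
  have h₁ := h u (u - τ - σ)
  have h₂ := h u (u - τ)
  have h₃ := h (u - τ) (u - τ - σ)
  rw [show u - (u - τ - σ) = τ + σ by ring] at h₁
  rw [show u - (u - τ) = τ by ring] at h₂
  rw [show u - τ - (u - τ - σ) = σ by ring] at h₃
  linarith

section FunctionalEquation

variable {c : ℝ} {A0 A3 μ : ℝ → ℝ}
  (h : ∀ u v, μ v - μ u = A0 (u - v) - c * (A0 (u - v) * u + A3 (u - v)))
include h

theorem A0_A3_cocycle (u τ σ : ℝ) :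
    A0 (τ + σ) - c * (A0 (τ + σ) * u + A3 (τ + σ)) =
      (A0 σ - c * (A0 σ * (u - τ) + A3 σ)) + (A0 τ - c * (A0 τ * u + A3 τ)) :=
  map_add_eq_of_sub_eq (F := fun u τ => A0 τ - c * (A0 τ * u + A3 τ)) h u τ σ

theorem A0_map_add (τ σ : ℝ) : A0 (τ + σ) = A0 τ + A0 σ := by
  have h₀ := A0_A3_cocycle h 0 τ σ
  rcases eq_or_ne c 0 with rfl | hc
  · linarith
  · -- the coefficient of `u` in the cocycle identity is `-c A₀`
    have h₁ := A0_A3_cocycle h 1 τ σ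
    exact mul_left_cancel₀ hc (by linear_combination h₀ - h₁)

theorem A3_map_add (hc : c ≠ 0) {c0 : ℝ} (hA0 : ∀ τ, A0 τ = c0 * τ) (τ σ : ℝ) :
    A3 (τ + σ) = A3 τ + A3 σ - c0 * τ * σ := by
  have h₀ := A0_A3_cocycle h 0 τ σ
  simp only [hA0] at h₀
  exact mul_left_cancel₀ hc (by linear_combination -h₀)

end FunctionalEquation

/-- If `μ(v) − μ(u) = A₀(u−v) − c·(A₀(u−v)·u + A₃(u−v))` for all `u, v`, then
`A₀(τ) = c₀·τ`, and when `c ≠ 0` also `A₃(τ) = −(c₀/2)τ² + c₃₁τ` and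
`μ(w) = (c·c₀/2)w² + (c·c₃₁ − c₀)w + k`. -/
theorem stmt1 (c : ℝ) (A0 A3 μ : ℝ → ℝ)
    (hA0 : ContDiff ℝ 2 A0) (hA3 : ContDiff ℝ 2 A3)
    (h : ∀ u v : ℝ, μ v - μ u = A0 (u - v) - c * (A0 (u - v) * u + A3 (u - v))) :
    ∃ c0 : ℝ, (∀ τ : ℝ, A0 τ = c0 * τ) ∧
      (c ≠ 0 → ∃ c31 k : ℝ,
        (∀ τ : ℝ, A3 τ = -(c0 / 2) * τ ^ 2 + c31 * τ) ∧
        (∀ w : ℝ, μ w = (c * c0 / 2) * w ^ 2 + (c * c31 - c0) * w + k)) := by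
  have hA0lin := hA0.continuous.eq_map_one_mul_of_map_add (A0_map_add h)
  refine ⟨A0 1, hA0lin, fun hc => ?_⟩
  have hA3quad := hA3.continuous.eq_quadratic_of_map_add_sub_mul _ (A3_map_add h hc hA0lin)
  refine ⟨A3 1 + A0 1 / 2, μ 0, hA3quad, fun w => ?_⟩
  have hw := h 0 w
  rw [zero_sub, hA0lin, hA3quad] at hw
  linear_combination hw
end

section
/- For smooth functions a, b : ℝ → ℝ define the bracket ⟦a, b⟧ := a·b' − b·a' (the coefficient of the commutator of the vector fields a(w)∂/∂w and b(w)∂/∂w). Let a(w) = c₄₀ + c₄₁·w + c₄₂·w² and let b be the constant function c₅. Then ⟦a, ⟦a, ⟦a, b⟧⟧⟧(w) = c₅·(4c₄₀c₄₂ − c₄₁²)·(c₄₁ + 2c₄₂·w) for all w, and ⟦b, ⟦a, ⟦a, ⟦a, b⟧⟧⟧⟧ is the constant function 2·c₄₂·c₅²·(4c₄₀c₄₂ − c₄₁²). -/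
/-- The coefficient of the commutator of the vector fields `a(w)∂/∂w` and `b(w)∂/∂w`. -/
noncomputable def vbracket (a b : ℝ → ℝ) : ℝ → ℝ :=
  fun w => a w * deriv b w - b w * deriv a w

lemma hasDerivAt_poly (p q r x : ℝ) :
    HasDerivAt (fun w : ℝ => p + q * w + r * w ^ 2) (q + 2 * r * x) x := by
  have h1 : HasDerivAt (fun w : ℝ => p + q * w) (q * 1) x :=
    ((hasDerivAt_id x).const_mul q).const_add p
  have h2 : HasDerivAt (fun w : ℝ => r * w ^ 2) (r * (↑2 * x ^ 1)) x :=
    (hasDerivAt_pow 2 x).const_mul r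
  have : HasDerivAt (fun w : ℝ => p + q * w + r * w ^ 2) (q * 1 + r * (↑2 * x ^ 1)) x :=
    h1.add h2
  convert this using 1; ring

lemma deriv_poly (p q r x : ℝ) :
    deriv (fun w : ℝ => p + q * w + r * w ^ 2) x = q + 2 * r * x :=
  (hasDerivAt_poly p q r x).deriv

lemma vb (p q r p' q' r' : ℝ) :
    vbracket (fun w => p + q * w + r * w ^ 2) (fun w => p' + q' * w + r' * w ^ 2) =
      fun w => (p * q' - p' * q) + (2 * p * r' - 2 * p' * r) * w +
        (q * r' - q' * r) * w ^ 2 := by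
  funext w
  unfold vbracket
  rw [deriv_poly, deriv_poly]
  ring

/-- For `a(w) = c₄₀ + c₄₁w + c₄₂w²` and `b ≡ c₅` one has
`⟦a,⟦a,⟦a,b⟧⟧⟧(w) = c₅(4c₄₀c₄₂ − c₄₁²)(c₄₁ + 2c₄₂w)` and
`⟦b,⟦a,⟦a,⟦a,b⟧⟧⟧⟧ ≡ 2c₄₂c₅²(4c₄₀c₄₂ − c₄₁²)`. -/
theorem stmt6 (c40 c41 c42 c5 : ℝ) (a b : ℝ → ℝ)
    (ha : ∀ w : ℝ, a w = c40 + c41 * w + c42 * w ^ 2)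
    (hb : ∀ w : ℝ, b w = c5) :
    (∀ w : ℝ, vbracket a (vbracket a (vbracket a b)) w =
        c5 * (4 * c40 * c42 - c41 ^ 2) * (c41 + 2 * c42 * w)) ∧
    (∀ w : ℝ, vbracket b (vbracket a (vbracket a (vbracket a b))) w =
        2 * c42 * c5 ^ 2 * (4 * c40 * c42 - c41 ^ 2)) := by
  have ha' : a = fun w => c40 + c41 * w + c42 * w ^ 2 := funext ha
  have hb' : b = fun w => c5 + 0 * w + 0 * w ^ 2 := funext fun w => by
    rw [hb w]; ring
  subst ha' hb'
  rw [vb, vb, vb, vb]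
  constructor <;> intro w <;> ring
end
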